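/- The spider Sp(1^[1], 2^[8]) (one leg of length 1 and eight legs of length 2) admits no local antimagic total labeling with exactly 2 distinct vertex weights; hence χ_lat(Sp(1, 2^[8])) = 3. -/

import Mathlib

open Finset

variable {V : Type*} [Fintype V] [DecidableEq V]

/-- The weight of a vertex `u` under the total labeling given by vertex labels `fv`
and edge labels `fe` : `w(u) = f(u) + \sum_{e incident to u} f(e)`. -/
def latWeight (G : SimpleGraph V) [DecidableRel G.Adj]
    (fv : V → ℕ) (fe : Sym2 V → ℕ) (u : V) : ℕ :=
  fv u + ∑ v ∈ G.neighborFinset u, fe s(u, v)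

/-- `fv, fe` together form a bijection from `V(G) ∪ E(G)` onto `{1, …, p + q}`,
where `p` is the order and `q` is the size of `G`. -/
def IsTotalLabeling (G : SimpleGraph V) [DecidableRel G.Adj]
    (fv : V → ℕ) (fe : Sym2 V → ℕ) : Prop :=
  Set.BijOn (Sum.elim fv (fun e : G.edgeSet => fe (e : Sym2 V))) Set.univ
    (Set.Icc 1 (Fintype.card V + G.edgeFinset.card))

/-- A local antimagic total labeling of `G` : a bijective total labeling such that any two
adjacent vertices get distinct weights. -/
def IsLocalAntimagicTotal (G : SimpleGraph V) [DecidableRel G.Adj]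
    (fv : V → ℕ) (fe : Sym2 V → ℕ) : Prop :=
  IsTotalLabeling G fv fe ∧
    ∀ ⦃u v : V⦄, G.Adj u v → latWeight G fv fe u ≠ latWeight G fv fe v

/-- The local antimagic total chromatic number `χ_lat(G)` : the minimum number of distinct
vertex weights taken over all local antimagic total labelings of `G`. -/
noncomputable def chiLat (G : SimpleGraph V) [DecidableRel G.Adj] : ℕ :=
  sInf {c | ∃ fv fe, IsLocalAntimagicTotal G fv fe ∧
    (Finset.univ.image (latWeight G fv fe)).card = c}

instance {W : Type*} (r : W → W → Prop) [DecidableEq W] [DecidableRel r] :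
    DecidableRel (SimpleGraph.fromRel r).Adj :=
  fun a b => decidable_of_iff _ (SimpleGraph.fromRel_adj r a b).symm

/-- Adjacency for the spider `Sp(1^[m], 2^[n])` : the center `x = none` is adjacent to each
leaf `y i = some (Sum.inl i)` and to each `u j = some (Sum.inr (j, false))`, and each `u j`
is adjacent to the leaf `v j = some (Sum.inr (j, true))`. -/
def spider12R (m n : ℕ) :
    Option (Fin m ⊕ Fin n × Bool) → Option (Fin m ⊕ Fin n × Bool) → Bool
  | none, some (Sum.inl _) => true
  | none, some (Sum.inr (_, false)) => true
  | some (Sum.inr (j, false)), some (Sum.inr (j', true)) => decide (j = j')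
  | _, _ => false

/-- The spider `Sp(1^[m], 2^[n])` with `m` legs of length `1` and `n` legs of length `2`. -/
abbrev spider12 (m n : ℕ) : SimpleGraph (Option (Fin m ⊕ Fin n × Bool)) :=
  SimpleGraph.fromRel (fun a b => spider12R m n a b = true)

/-!
If a local antimagic total labeling `f` had only two weights `a = w(x)` and `b`, then, adjacent
weights being distinct, `w(y) = w(u_j) = b` and `w(v_j) = a`. The sixteen labels of the pairs
`v_j, u_j v_j` sum to `8a`; the other nineteen labels sum to `630 - 8a ≥ 1 + ⋯ + 19`, so `a ≤ 55`,
while the ten labels at `x` sum to `a ≥ 1 + ⋯ + 10 = 55`. So the labels at `x` are `1, …, 10` and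
the nineteen labels off the pairs are `1, …, 19`, whence
`w(y) = f(y) + f(xy) ≤ 19 + 10 < 11 + 1 + 20 ≤ f(u_1) + f(xu_1) + f(u_1v_1) = w(u_1)`.
An explicit labeling with three weights gives `χ_lat = 3`.
-/

open Function SimpleGraph

theorem Finset.card_mul_card_add_one_le_two_mul_sum {s : Finset ℕ} (hs : 0 ∉ s) :
    #s * (#s + 1) ≤ 2 * ∑ x ∈ s, x := by
  induction s using Finset.induction_on_max with
  | empty => simp
  | insert a s hlt ih =>
    have ha : a ∉ s := fun h => (hlt a h).false
    have hs0 : 0 ∉ s := fun h => hs (mem_insert_of_mem h)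
    have hcard : #s < a := by
      have hsub : s ⊆ Ioo 0 a := fun x hx =>
        mem_Ioo.2 ⟨Nat.pos_of_ne_zero fun h => hs0 (h ▸ hx), hlt x hx⟩
      have := card_le_card hsub
      rw [Nat.card_Ioo] at this
      have : a ≠ 0 := fun h => hs (h ▸ mem_insert_self a s)
      omega
    rw [card_insert_of_notMem ha, sum_insert ha]
    nlinarith [ih hs0]

theorem Function.Injective.card_mul_card_add_one_le_two_mul_sum {ι : Type*} {m : ι → ℕ}
    (hm : Injective m) (h0 : ∀ i, m i ≠ 0) (s : Finset ι) :
    #s * (#s + 1) ≤ 2 * ∑ i ∈ s, m i := by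
  classical
  have := Finset.card_mul_card_add_one_le_two_mul_sum (s := s.image m)
    (by simpa using fun i _ => h0 i)
  rwa [card_image_of_injective s hm, sum_image fun i _ j _ h => hm h] at this

theorem Function.Injective.image_univ_eq_Icc {ι : Type*} [Fintype ι] {m : ι → ℕ} {N : ℕ}
    (hm : Injective m) (hN : Fintype.card ι = N) (hmem : ∀ i, m i ∈ Icc 1 N) :
    univ.image m = Icc 1 N :=
  eq_of_subset_of_card_le (fun x hx => by obtain ⟨i, -, rfl⟩ := mem_image.1 hx; exact hmem i)
    (by simp [card_image_of_injective _ hm, hN])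

theorem Function.Injective.two_mul_add_le_two_mul_sum_of_mem {ι : Type*} [DecidableEq ι]
    {m : ι → ℕ} (hm : Injective m) (h0 : ∀ i, m i ≠ 0) {s : Finset ι} {i : ι} (hi : i ∈ s) :
    2 * m i + (#s - 1) * #s ≤ 2 * ∑ j ∈ s, m j := by
  have := hm.card_mul_card_add_one_le_two_mul_sum h0 (s.erase i)
  rw [card_erase_of_mem hi, Nat.sub_add_cancel (card_pos.2 ⟨i, hi⟩)] at this
  rw [← sum_erase_add s m hi]
  omega

theorem Function.Injective.le_two_mul_sum_add_of_notMem {ι : Type*} [DecidableEq ι]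
    {m : ι → ℕ} (hm : Injective m) (h0 : ∀ i, m i ≠ 0) {s : Finset ι} {i : ι} (hi : i ∉ s) :
    (#s + 1) * (#s + 2) ≤ 2 * (∑ j ∈ s, m j + m i) := by
  have := hm.card_mul_card_add_one_le_two_mul_sum h0 (insert i s)
  rwa [card_insert_of_notMem hi, sum_insert hi, add_comm (m i)] at this

namespace SimpleGraph

theorem eq_of_adj_of_adj_of_card_image_le_two {W α : Type*} [Fintype W] [DecidableEq α]
    {G : SimpleGraph W} {c : W → α} (hc : ∀ ⦃u v⦄, G.Adj u v → c u ≠ c v)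
    (h2 : #(univ.image c) ≤ 2) ⦃u v w : W⦄ (huv : G.Adj u v) (hvw : G.Adj v w) : c u = c w := by
  by_contra h
  have hsub : {c u, c v, c w} ⊆ univ.image c := by
    intro x hx
    simp only [mem_insert, mem_singleton] at hx
    rcases hx with rfl | rfl | rfl <;> exact mem_image_of_mem c (mem_univ _)
  have := card_le_card hsub
  rw [card_insert_of_notMem (by simp [hc huv, h]), card_pair (hc hvw)] at this
  omega

end SimpleGraph

section TotalLabeling

variable {W : Type*} [Fintype W] {G : SimpleGraph W} [DecidableRel G.Adj]
  {fv : W → ℕ} {fe : Sym2 W → ℕ}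

variable (G fv fe) in
def totalLabel : W ⊕ G.edgeSet → ℕ :=
  Sum.elim fv fun e => fe e

theorem isTotalLabeling_iff {ι : Type*} (e : ι ≃ W ⊕ G.edgeSet) :
    IsTotalLabeling G fv fe ↔ Injective (totalLabel G fv fe ∘ e) ∧
      ∀ i, totalLabel G fv fe (e i) ∈ Icc 1 (Fintype.card W + #G.edgeFinset) := by
  rw [EquivLike.injective_comp, e.forall_congr_right (q := fun z => totalLabel G fv fe z ∈ _)]
  refine ⟨fun h => ⟨Set.injOn_univ.1 h.injOn, fun z => mem_Icc.2 (h.mapsTo (Set.mem_univ z))⟩,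
    fun ⟨hinj, hmem⟩ => ⟨fun z _ => mem_Icc.1 (hmem z), hinj.injOn, ?_⟩⟩
  have hcard : Fintype.card (W ⊕ G.edgeSet) = Fintype.card W + #G.edgeFinset := by
    rw [Fintype.card_sum, edgeFinset_card]
  have himage := hinj.image_univ_eq_Icc hcard hmem
  intro x hx
  rw [← coe_Icc, ← himage, coe_image, coe_univ] at hx
  exact hx

variable (fv fe) in
theorem latWeight_eq_add_sum_incidenceFinset [DecidableEq W] (u : W) :
    latWeight G fv fe u = fv u + ∑ e ∈ G.incidenceFinset u, fe e := by
  have himage : G.incidenceFinset u = (G.neighborFinset u).image (s(u, ·)) := by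
    ext e
    induction e using Sym2.ind with
    | _ a b =>
      simp only [mem_incidenceFinset, mk'_mem_incidenceSet_iff, mem_image, mem_neighborFinset,
        Sym2.eq_iff]
      constructor
      · rintro ⟨hab, rfl | rfl⟩
        exacts [⟨b, hab, .inl ⟨rfl, rfl⟩⟩, ⟨a, hab.symm, .inr ⟨rfl, rfl⟩⟩]
      · rintro ⟨v, huv, ⟨rfl, rfl⟩ | ⟨rfl, rfl⟩⟩
        exacts [⟨huv, .inl rfl⟩, ⟨huv.symm, .inr rfl⟩]
  rw [latWeight, himage, sum_image fun v _ w _ h => Sym2.congr_right.1 h]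

theorem two_le_card_image_latWeight (h : IsLocalAntimagicTotal G fv fe) {u v : W}
    (huv : G.Adj u v) : 2 ≤ #(univ.image (latWeight G fv fe)) :=
  one_lt_card.2 ⟨_, mem_image_of_mem _ (mem_univ u), _, mem_image_of_mem _ (mem_univ v), h.2 huv⟩

theorem chiLat_eq_of_forall_le {k : ℕ}
    (hex : ∃ fv fe, IsLocalAntimagicTotal G fv fe ∧ #(univ.image (latWeight G fv fe)) = k)
    (hle : ∀ fv fe, IsLocalAntimagicTotal G fv fe → k ≤ #(univ.image (latWeight G fv fe))) :
    chiLat G = k :=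
  le_antisymm (Nat.sInf_le hex) (le_csInf ⟨k, hex⟩ fun _ ⟨fv, fe, h, hc⟩ => hc ▸ hle fv fe h)

end TotalLabeling

namespace Spider12

variable {m n : ℕ}

def parent : Fin m ⊕ Fin n × Bool → Option (Fin m ⊕ Fin n × Bool)
  | .inr (j, true) => some (.inr (j, false))
  | _ => none

/-- Edges of the spider are indexed by their endpoint farther from the centre. -/
def parentEdge (c : Fin m ⊕ Fin n × Bool) : Sym2 (Option (Fin m ⊕ Fin n × Bool)) :=
  s(parent c, some c)

theorem parent_ne_self (c : Fin m ⊕ Fin n × Bool) : parent c ≠ some c := by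
  rcases c with _ | ⟨_, _ | _⟩ <;> simp [parent]

theorem parentEdge_injective : Injective (parentEdge (m := m) (n := n)) := by
  intro c c' h
  rcases Sym2.eq_iff.1 h with ⟨-, h⟩ | ⟨h1, h2⟩
  · exact Option.some_injective _ h
  · rcases c with _ | ⟨_, _ | _⟩ <;> rcases c' with _ | ⟨_, _ | _⟩ <;> simp_all [parent]

theorem spider12R_eq_true_iff {a b : Option (Fin m ⊕ Fin n × Bool)} :
    spider12R m n a b = true ↔ ∃ c, parent c = a ∧ some c = b := by
  rcases a with _ | _ | ⟨_, _ | _⟩ <;> rcases b with _ | _ | ⟨_, _ | _⟩ <;>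
    simp [spider12R, parent, eq_comm]

theorem edgeSet_eq_range : (spider12 m n).edgeSet = Set.range parentEdge := by
  ext e
  induction e using Sym2.ind with
  | _ a b =>
    simp only [mem_edgeSet, fromRel_adj, spider12R_eq_true_iff, Set.mem_range, parentEdge,
      Sym2.eq_iff]
    constructor
    · rintro ⟨-, ⟨c, rfl, rfl⟩ | ⟨c, rfl, rfl⟩⟩
      exacts [⟨c, .inl ⟨rfl, rfl⟩⟩, ⟨c, .inr ⟨rfl, rfl⟩⟩]
    · rintro ⟨c, ⟨rfl, rfl⟩ | ⟨rfl, rfl⟩⟩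
      exacts [⟨parent_ne_self c, .inl ⟨c, rfl, rfl⟩⟩,
        ⟨(parent_ne_self c).symm, .inr ⟨c, rfl, rfl⟩⟩]

theorem adj_parent (c : Fin m ⊕ Fin n × Bool) : (spider12 m n).Adj (parent c) (some c) := by
  rw [← mem_edgeSet, edgeSet_eq_range]
  exact ⟨c, rfl⟩

noncomputable def edgeEquiv : (Fin m ⊕ Fin n × Bool) ≃ (spider12 m n).edgeSet :=
  Equiv.ofBijective (fun c => ⟨parentEdge c, edgeSet_eq_range ▸ ⟨c, rfl⟩⟩) <| by
    refine ⟨fun c c' h => parentEdge_injective (congrArg Subtype.val h), ?_⟩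
    rintro ⟨e, he⟩
    rw [edgeSet_eq_range] at he
    obtain ⟨c, rfl⟩ := he
    exact ⟨c, rfl⟩

theorem card_edgeFinset : #(spider12 m n).edgeFinset = m + 2 * n := by
  rw [edgeFinset_card, ← Fintype.card_congr edgeEquiv]
  simp [mul_comm]

theorem isTotalLabeling_iff {fv : Option (Fin m ⊕ Fin n × Bool) → ℕ}
    {fe : Sym2 (Option (Fin m ⊕ Fin n × Bool)) → ℕ} :
    IsTotalLabeling (spider12 m n) fv fe ↔ Injective (Sum.elim fv (fe ∘ parentEdge)) ∧
      ∀ i, Sum.elim fv (fe ∘ parentEdge) i ∈ Icc 1 (2 * (m + 2 * n) + 1) := by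
  have hcard : Fintype.card (Option (Fin m ⊕ Fin n × Bool)) + #(spider12 m n).edgeFinset =
      2 * (m + 2 * n) + 1 := by
    simp [card_edgeFinset]
    ring
  rw [_root_.isTotalLabeling_iff (Equiv.sumCongr (Equiv.refl _) edgeEquiv), hcard]
  have : totalLabel _ fv fe ∘ Equiv.sumCongr (Equiv.refl _) edgeEquiv =
      Sum.elim fv (fe ∘ parentEdge) := by
    funext i; rcases i with _ | _ <;> rfl
  simp only [← this]
  rfl

section Weights

variable (fv : Option (Fin m ⊕ Fin n × Bool) → ℕ) (fe : Sym2 (Option (Fin m ⊕ Fin n × Bool)) → ℕ)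

theorem latWeight_eq (z : Option (Fin m ⊕ Fin n × Bool)) :
    latWeight (spider12 m n) fv fe z = fv z + ∑ c with z ∈ parentEdge c, fe (parentEdge c) := by
  rw [latWeight_eq_add_sum_incidenceFinset, ← sum_image parentEdge_injective.injOn]
  congr 2
  ext e
  simp only [mem_incidenceFinset, incidenceSet, edgeSet_eq_range, Set.mem_ofPred_eq,
    Set.mem_range, mem_image, mem_filter, mem_univ, true_and]
  constructor
  · rintro ⟨⟨c, rfl⟩, hz⟩; exact ⟨c, hz, rfl⟩
  · rintro ⟨c, hz, rfl⟩; exact ⟨⟨c, rfl⟩, hz⟩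

theorem latWeight_center :
    latWeight (spider12 m n) fv fe none =
      fv none + (∑ i, fe (parentEdge (.inl i)) + ∑ j, fe (parentEdge (.inr (j, false)))) := by
  rw [latWeight_eq, sum_filter, Fintype.sum_sum_type, Fintype.sum_prod_type]
  simp [parentEdge, parent]

theorem latWeight_leaf (i : Fin m) :
    latWeight (spider12 m n) fv fe (some (.inl i)) =
      fv (some (.inl i)) + fe (parentEdge (.inl i)) := by
  rw [latWeight_eq, sum_filter, Fintype.sum_sum_type, Fintype.sum_prod_type]
  simp [parentEdge, parent]

theorem latWeight_inner (j : Fin n) :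
    latWeight (spider12 m n) fv fe (some (.inr (j, false))) = fv (some (.inr (j, false))) +
      (fe (parentEdge (.inr (j, false))) + fe (parentEdge (.inr (j, true)))) := by
  rw [latWeight_eq, sum_filter, Fintype.sum_sum_type, Fintype.sum_prod_type]
  simp [parentEdge, parent, sum_add_distrib, add_comm]

theorem latWeight_outer (j : Fin n) :
    latWeight (spider12 m n) fv fe (some (.inr (j, true))) =
      fv (some (.inr (j, true))) + fe (parentEdge (.inr (j, true))) := by
  rw [latWeight_eq, sum_filter, Fintype.sum_sum_type, Fintype.sum_prod_type]
  simp [parentEdge, parent]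

end Weights

theorem false_of_two_weights {ℓ : Option (Fin 1 ⊕ Fin 8 × Bool) ⊕ (Fin 1 ⊕ Fin 8 × Bool) → ℕ}
    (hinj : Injective ℓ) (hmem : ∀ i, ℓ i ∈ Icc 1 35) {a b : ℕ}
    (hcenter : ℓ (.inl none) + (∑ i, ℓ (.inr (.inl i)) + ∑ j, ℓ (.inr (.inr (j, false)))) = a)
    (houter : ∀ j, ℓ (.inl (some (.inr (j, true)))) + ℓ (.inr (.inr (j, true))) = a)
    (hleaf : ℓ (.inl (some (.inl 0))) + ℓ (.inr (.inl 0)) = b)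
    (hinner : ℓ (.inl (some (.inr (0, false)))) +
      (ℓ (.inr (.inr (0, false))) + ℓ (.inr (.inr (0, true)))) = b) :
    False := by
  -- `P`: the labels of the eight pairs `v_j, u_j v_j`; `T`: the labels at the centre `x`.
  set P : Finset (Option (Fin 1 ⊕ Fin 8 × Bool) ⊕ (Fin 1 ⊕ Fin 8 × Bool)) :=
    univ.image (fun j => .inl (some (.inr (j, true)))) ∪
      univ.image (fun j => .inr (.inr (j, true)))
  set T : Finset (Option (Fin 1 ⊕ Fin 8 × Bool) ⊕ (Fin 1 ⊕ Fin 8 × Bool)) :=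
    insert (.inl none) (insert (.inr (.inl 0)) (univ.image fun j => .inr (.inr (j, false))))
  have hP : ∑ i ∈ P, ℓ i = 8 * a := by
    rw [sum_union (by decide), sum_image (by decide), sum_image (by decide), ← sum_add_distrib,
      sum_congr rfl fun j _ => houter j]
    simp
  have hT : ∑ i ∈ T, ℓ i = a := by
    rw [sum_insert (by decide), sum_insert (by decide), sum_image (by decide), ← hcenter]
    simp
  have htotal : ∑ i, ℓ i = 630 := calc
    ∑ i, ℓ i = ∑ x ∈ univ.image ℓ, x := (sum_image (f := fun x => x) hinj.injOn).symm
    _ = 630 := by rw [hinj.image_univ_eq_Icc rfl hmem]; decide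
  have hK : ∑ i ∈ Pᶜ, ℓ i + 8 * a = 630 := by rw [← hP, sum_compl_add_sum, htotal]
  have h0 i : ℓ i ≠ 0 := Nat.one_le_iff_ne_zero.1 (mem_Icc.1 (hmem i)).1
  have hTcard : #T = 10 := by decide
  have hKcard : #Pᶜ = 19 := by decide
  have hT55 := hinj.card_mul_card_add_one_le_two_mul_sum h0 T
  have hK190 := hinj.card_mul_card_add_one_le_two_mul_sum h0 Pᶜ
  have hcx := hinj.two_mul_add_le_two_mul_sum_of_mem h0 (s := T) (i := .inr (.inl 0)) (by decide)
  have hy := hinj.two_mul_add_le_two_mul_sum_of_mem h0 (s := Pᶜ) (i := .inl (some (.inl 0)))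
    (by decide)
  have hu := hinj.le_two_mul_sum_add_of_notMem h0 (s := T) (i := .inl (some (.inr (0, false))))
    (by decide)
  have huv := hinj.le_two_mul_sum_add_of_notMem h0 (s := Pᶜ) (i := .inr (.inr (0, true)))
    (by decide)
  have hxu := h0 (.inr (.inr (0, false)))
  rw [hTcard, hT] at hT55 hcx hu
  rw [hKcard] at hK190 hy huv
  omega

theorem card_image_latWeight_ne_two {fv : Option (Fin 1 ⊕ Fin 8 × Bool) → ℕ}
    {fe : Sym2 (Option (Fin 1 ⊕ Fin 8 × Bool)) → ℕ}
    (h : IsLocalAntimagicTotal (spider12 1 8) fv fe) :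
    #(univ.image (latWeight (spider12 1 8) fv fe)) ≠ 2 := by
  intro h2
  obtain ⟨hinj, hmem⟩ := isTotalLabeling_iff.1 h.1
  have hw := eq_of_adj_of_adj_of_card_image_le_two h.2 h2.le
  refine false_of_two_weights hinj hmem (latWeight_center fv fe).symm (fun j => ?_)
    (latWeight_leaf fv fe 0).symm ?_
  · exact (latWeight_outer fv fe j).symm.trans
      (hw (adj_parent (.inr (j, true))).symm (adj_parent (.inr (j, false))).symm)
  · exact (latWeight_inner fv fe 0).symm.trans
      (hw (adj_parent (.inr (0, false))).symm (adj_parent (.inl 0)))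

/-- Its vertex weights are `203` at `x`, `36` at `y` and at every `v_j`, and `68` at every `u_j`. -/
def exampleLabel : Option (Fin 1 ⊕ Fin 8 × Bool) ⊕ (Fin 1 ⊕ Fin 8 × Bool) → ℕ
  | .inl none => 14
  | .inl (some (.inl _)) => 27
  | .inl (some (.inr (j, false))) => ![10, 12, 11, 16, 18, 17, 13, 15] j
  | .inl (some (.inr (j, true))) => j + 1
  | .inr (.inl _) => 9
  | .inr (.inr (j, false)) => ![23, 22, 24, 20, 19, 21, 26, 25] j
  | .inr (.inr (j, true)) => 35 - j

theorem exists_three_weights : ∃ fv fe, IsLocalAntimagicTotal (spider12 1 8) fv fe ∧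
    #(univ.image (latWeight (spider12 1 8) fv fe)) = 3 := by
  let fv := exampleLabel ∘ Sum.inl
  let fe := extend parentEdge (exampleLabel ∘ Sum.inr) 0
  have hfe c : fe (parentEdge c) = exampleLabel (.inr c) :=
    parentEdge_injective.extend_apply _ _ c
  have hlabel : Sum.elim fv (fe ∘ parentEdge) = exampleLabel := by
    funext i
    rcases i with _ | c
    exacts [rfl, hfe c]
  have hweight : latWeight (spider12 1 8) fv fe =
      fun z => exampleLabel (.inl z) + ∑ c with z ∈ parentEdge c, exampleLabel (.inr c) := by
    funext z
    simp only [latWeight_eq, hfe]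
    rfl
  refine ⟨fv, fe, ⟨isTotalLabeling_iff.2 (hlabel ▸ ⟨by decide, by decide⟩), ?_⟩, ?_⟩
  · rw [hweight]
    decide
  · rw [hweight]
    decide

end Spider12

/-- The spider `Sp(1^[1], 2^[8])` admits no local antimagic total labeling with exactly
`2` distinct vertex weights; hence its local antimagic total chromatic number is `3`. -/
theorem chiLat_spider12_one_eight :
    (∀ fv fe, IsLocalAntimagicTotal (spider12 1 8) fv fe →
      (Finset.univ.image (latWeight (spider12 1 8) fv fe)).card ≠ 2) ∧
    chiLat (spider12 1 8) = 3 := by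
  refine ⟨fun _ _ => Spider12.card_image_latWeight_ne_two, ?_⟩
  refine chiLat_eq_of_forall_le Spider12.exists_three_weights fun fv fe h => ?_
  have hge := two_le_card_image_latWeight h (Spider12.adj_parent (.inl 0))
  have hne := Spider12.card_image_latWeight_ne_two h
  omega
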